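/- Fix a base point w₀ ∈ ℝ^d, μ > 0 and γ ∈ [0,1). Suppose each F_k is convex with L-Lipschitz gradient and f has L-Lipschitz gradient. Let g be a random vector in ℝ^d with E[g] = ∇f(w₀), and for each device k and each realization of g let w_k(g) be a γ-inexact minimizer of the FedDANE subproblem P_k with base point w₀, gradient estimate g and penalty μ. Then Σ_{k=1}^N p_k E[f(w_k(g))] ≤ f(w₀) − ((2 − 3γ)/(2μ)) ‖∇f(w₀)‖² + ((2L(1+γ)² + 3L)/(2μ²)) ‖∇f(w₀)‖² + (L(1+γ)²/μ² + L/μ² + γ/μ) E[‖g − ∇f(w₀)‖²]. -/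

import Mathlib

/-!
Convexity makes each `∇F_k` monotone, so the stationarity equation
`g + (∇F_k(w̄) - ∇F_k(w₀)) + μ (w̄ - w₀) = 0` of the exact minimizer `w̄` gives `μ ‖w̄ - w₀‖ ≤ ‖g‖`,
and pairing the same equation with `∇f(w₀)` bounds `μ ⟪∇f(w₀), w̄ - w₀⟫` by
`-⟪∇f(w₀), g⟫ + L ‖∇f(w₀)‖ ‖w̄ - w₀‖`. The descent lemma for `f` at `w₀`, together with
`‖w - w₀‖ ≤ (1 + γ) ‖w̄ - w₀‖`, turns these into a pointwise bound on `f(w)` in which `g` enters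
only through `‖g - ∇f(w₀)‖²` and through `⟪∇f(w₀), g - ∇f(w₀)⟫`, whose expectation vanishes.
-/

open scoped RealInnerProductSpace
open MeasureTheory

section InnerProductSpace

variable {E : Type*} [NormedAddCommGroup E] [InnerProductSpace ℝ E] [CompleteSpace E]

theorem hasDerivAt_comp_add_smul {f : E → ℝ} {x v : E} {t : ℝ}
    (hd : DifferentiableAt ℝ f (x + t • v)) :
    HasDerivAt (fun s : ℝ => f (x + s • v)) ⟪gradient f (x + t • v), v⟫ t := by
  have hline : HasDerivAt (fun s : ℝ => x + s • v) v t := by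
    simpa using ((hasDerivAt_id t).smul_const v).const_add x
  exact hd.hasGradientAt.hasFDerivAt.comp_hasDerivAt t hline

theorem ConvexOn.add_inner_gradient_le {F : E → ℝ} (hc : ConvexOn ℝ Set.univ F) {x : E}
    (hd : DifferentiableAt ℝ F x) (y : E) : F x + ⟪gradient F x, y - x⟫ ≤ F y := by
  have hline : ConvexOn ℝ Set.univ fun t : ℝ => F (x + t • (y - x)) := by
    have heq : (fun t : ℝ => F (x + t • (y - x))) = F ∘ AffineMap.lineMap x y := by
      funext t; simp [AffineMap.lineMap_apply_module', add_comm]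
    simpa [heq] using hc.comp_affineMap (AffineMap.lineMap x y)
  have hderiv := hasDerivAt_comp_add_smul (x := x) (v := y - x) (t := 0) (by simpa using hd)
  have hslope := hline.le_slope_of_hasDerivAt (Set.mem_univ 0) (Set.mem_univ 1) one_pos hderiv
  simp only [slope, zero_smul, add_zero, one_smul, add_sub_cancel, sub_zero, vsub_eq_sub,
    inv_one, smul_eq_mul, one_mul] at hslope
  linarith

theorem ConvexOn.inner_gradient_sub_gradient_nonneg {F : E → ℝ} (hc : ConvexOn ℝ Set.univ F)
    {x y : E} (hx : DifferentiableAt ℝ F x) (hy : DifferentiableAt ℝ F y) :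
    0 ≤ ⟪gradient F x - gradient F y, x - y⟫ := by
  have hxy := hc.add_inner_gradient_le hx y
  have hyx := hc.add_inner_gradient_le hy x
  rw [← neg_sub x y, inner_neg_right] at hxy
  rw [inner_sub_left]
  linarith

theorem descent_lemma {f : E → ℝ} (hd : Differentiable ℝ f) {L : ℝ}
    (hlip : ∀ x y, ‖gradient f x - gradient f y‖ ≤ L * ‖x - y‖) (x y : E) :
    f y ≤ f x + ⟪gradient f x, y - x⟫ + L / 2 * ‖y - x‖ ^ 2 := by
  set v := y - x
  let φ : ℝ → ℝ := fun t => f (x + t • v) - t * ⟪gradient f x, v⟫ - L / 2 * t ^ 2 * ‖v‖ ^ 2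
  have hφ : ∀ t, HasDerivAt φ
      (⟪gradient f (x + t • v), v⟫ - ⟪gradient f x, v⟫ - L * t * ‖v‖ ^ 2) t := by
    intro t
    have := ((hasDerivAt_comp_add_smul (x := x) (v := v) (hd _)).sub
      ((hasDerivAt_id t).mul_const ⟪gradient f x, v⟫)).sub
      (((hasDerivAt_pow 2 t).const_mul (L / 2)).mul_const (‖v‖ ^ 2))
    exact this.congr_deriv
      (by simp only [one_mul, Nat.cast_ofNat, Nat.add_one_sub_one, pow_one]; ring)
  have hφ' : ∀ t ∈ interior (Set.Icc (0 : ℝ) 1),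
      ⟪gradient f (x + t • v), v⟫ - ⟪gradient f x, v⟫ - L * t * ‖v‖ ^ 2 ≤ 0 := by
    intro t ht
    rw [interior_Icc] at ht
    calc ⟪gradient f (x + t • v), v⟫ - ⟪gradient f x, v⟫ - L * t * ‖v‖ ^ 2
        = ⟪gradient f (x + t • v) - gradient f x, v⟫ - L * t * ‖v‖ ^ 2 := by
          rw [inner_sub_left]
      _ ≤ L * ‖(x + t • v) - x‖ * ‖v‖ - L * t * ‖v‖ ^ 2 := by
          gcongr
          exact (real_inner_le_norm _ _).trans
            (mul_le_mul_of_nonneg_right (hlip _ _) (norm_nonneg v))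
      _ = 0 := by
          rw [add_sub_cancel_left, norm_smul, Real.norm_of_nonneg ht.1.le]; ring
  have hanti := antitoneOn_of_hasDerivWithinAt_nonpos (convex_Icc (0 : ℝ) 1)
    (fun t _ => (hφ t).continuousAt.continuousWithinAt)
    (fun t _ => (hφ t).hasDerivWithinAt) hφ'
  have := hanti (Set.left_mem_Icc.2 zero_le_one) (Set.right_mem_Icc.2 zero_le_one) zero_le_one
  simp only [φ, v, zero_smul, add_zero, zero_mul, sub_zero, one_smul, add_sub_cancel, one_mul,
    one_pow, ne_eq, OfNat.ofNat_ne_zero, not_false_eq_true, zero_pow, mul_zero] at this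
  linarith

noncomputable def fedDaneSubproblem (F : E → ℝ) (w₀ g : E) (μ : ℝ) (w : E) : ℝ :=
  F w + ⟪g - gradient F w₀, w - w₀⟫ + μ / 2 * ‖w - w₀‖ ^ 2

theorem hasGradientAt_fedDaneSubproblem {F : E → ℝ} {w₀ g w : E} (μ : ℝ)
    (hd : DifferentiableAt ℝ F w) :
    HasGradientAt (fedDaneSubproblem F w₀ g μ)
      (gradient F w + (g - gradient F w₀) + μ • (w - w₀)) w := by
  have hshift : HasFDerivAt (fun v : E => v - w₀) (ContinuousLinearMap.id ℝ E) w :=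
    (hasFDerivAt_id w).sub_const w₀
  have h := (hd.hasGradientAt.hasFDerivAt.add
    ((innerSL ℝ (g - gradient F w₀)).hasFDerivAt.comp w hshift)).add
    (hshift.norm_sq.const_mul (μ / 2))
  rw [hasGradientAt_iff_hasFDerivAt]
  refine h.congr_fderiv ?_
  ext v
  simp only [InnerProductSpace.toDual_apply_apply, inner_add_left, real_inner_smul_left,
    add_apply, ContinuousLinearMap.comp_id, innerSL_apply_apply,
    smul_apply, smul_eq_mul, nsmul_eq_mul]
  ring

theorem fedDaneSubproblem_stationary {F : E → ℝ} {w₀ g wbar : E} {μ : ℝ}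
    (hd : DifferentiableAt ℝ F wbar)
    (hmin : ∀ v, fedDaneSubproblem F w₀ g μ wbar ≤ fedDaneSubproblem F w₀ g μ v) :
    g + (gradient F wbar - gradient F w₀) + μ • (wbar - w₀) = 0 := by
  have hloc : IsLocalMin (fedDaneSubproblem F w₀ g μ) wbar := Filter.Eventually.of_forall hmin
  have h := hloc.hasFDerivAt_eq_zero (hasGradientAt_fedDaneSubproblem μ hd).hasFDerivAt
  rw [LinearIsometryEquiv.map_eq_zero_iff] at h
  rw [← h]; abel

section Minimizer

variable {F : E → ℝ} {w₀ g wbar : E} {μ : ℝ}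

theorem mul_norm_sub_le_of_fedDaneSubproblem_min (hc : ConvexOn ℝ Set.univ F)
    (hd : DifferentiableAt ℝ F wbar) (hd₀ : DifferentiableAt ℝ F w₀)
    (hmin : ∀ v, fedDaneSubproblem F w₀ g μ wbar ≤ fedDaneSubproblem F w₀ g μ v) :
    μ * ‖wbar - w₀‖ ≤ ‖g‖ := by
  have hstat := fedDaneSubproblem_stationary hd hmin
  set u := wbar - w₀
  replace hstat : ⟪g, u⟫ + ⟪gradient F wbar - gradient F w₀, u⟫ + μ * ‖u‖ ^ 2 = 0 := by
    have h := congrArg (fun z => ⟪z, u⟫) hstat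
    simpa only [inner_add_left, real_inner_smul_left, real_inner_self_eq_norm_sq,
      inner_zero_left] using h
  have hmono := hc.inner_gradient_sub_gradient_nonneg hd hd₀
  have hcs := neg_le_of_abs_le (abs_real_inner_le_norm g u)
  rcases (norm_nonneg u).eq_or_lt with hu | hu
  · rw [← hu, mul_zero]; exact norm_nonneg g
  · exact le_of_mul_le_mul_right (by nlinarith) hu

theorem mul_inner_sub_le_of_fedDaneSubproblem_min {L : ℝ}
    (hd : DifferentiableAt ℝ F wbar)
    (hlip : ∀ x y, ‖gradient F x - gradient F y‖ ≤ L * ‖x - y‖)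
    (hmin : ∀ v, fedDaneSubproblem F w₀ g μ wbar ≤ fedDaneSubproblem F w₀ g μ v) (G : E) :
    μ * ⟪G, wbar - w₀⟫ ≤ -⟪G, g⟫ + L * ‖G‖ * ‖wbar - w₀‖ := by
  have hstat : ⟪G, g⟫ + ⟪G, gradient F wbar - gradient F w₀⟫ + μ * ⟪G, wbar - w₀⟫ = 0 := by
    have h := congrArg (fun z => ⟪G, z⟫) (fedDaneSubproblem_stationary hd hmin)
    simpa only [inner_add_right, real_inner_smul_right, inner_zero_right] using h
  have hcs := neg_le_of_abs_le (abs_real_inner_le_norm G (gradient F wbar - gradient F w₀))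
  have hgrad := mul_le_mul_of_nonneg_left (hlip wbar w₀) (norm_nonneg G)
  nlinarith

end Minimizer

theorem descent_lemma_of_norm_sub_le {f : E → ℝ} (hd : Differentiable ℝ f) {L : ℝ} (hL : 0 ≤ L)
    (hlip : ∀ x y, ‖gradient f x - gradient f y‖ ≤ L * ‖x - y‖) {w₀ w wbar : E} {γ : ℝ}
    (hw : ‖w - wbar‖ ≤ γ * ‖wbar - w₀‖) :
    f w ≤ f w₀ + ⟪gradient f w₀, wbar - w₀⟫ + γ * ‖gradient f w₀‖ * ‖wbar - w₀‖
      + L / 2 * ((1 + γ) * ‖wbar - w₀‖) ^ 2 := by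
  have hsplit : w - w₀ = (w - wbar) + (wbar - w₀) := by abel
  have hinner : ⟪gradient f w₀, w - wbar⟫ ≤ γ * ‖gradient f w₀‖ * ‖wbar - w₀‖ :=
    calc ⟪gradient f w₀, w - wbar⟫ ≤ ‖gradient f w₀‖ * ‖w - wbar‖ := real_inner_le_norm _ _
      _ ≤ ‖gradient f w₀‖ * (γ * ‖wbar - w₀‖) := by gcongr
      _ = γ * ‖gradient f w₀‖ * ‖wbar - w₀‖ := by ring
  have hnorm : ‖w - w₀‖ ≤ (1 + γ) * ‖wbar - w₀‖ := by
    rw [hsplit]; linarith [norm_add_le (w - wbar) (wbar - w₀)]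
  have hdesc := descent_lemma hd hlip w₀ w
  rw [hsplit, inner_add_right, ← hsplit] at hdesc
  have hsq : L / 2 * ‖w - w₀‖ ^ 2 ≤ L / 2 * ((1 + γ) * ‖wbar - w₀‖) ^ 2 := by gcongr
  linarith

theorem fedDane_descent_of_inexact_minimizer {f F : E → ℝ} {w₀ g w wbar : E} {μ γ L : ℝ}
    (hμ : 0 < μ) (hγ : 0 ≤ γ) (hL : 0 ≤ L)
    (hf : Differentiable ℝ f) (hflip : ∀ x y, ‖gradient f x - gradient f y‖ ≤ L * ‖x - y‖)
    (hc : ConvexOn ℝ Set.univ F) (hF : Differentiable ℝ F)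
    (hFlip : ∀ x y, ‖gradient F x - gradient F y‖ ≤ L * ‖x - y‖)
    (hmin : ∀ v, fedDaneSubproblem F w₀ g μ wbar ≤ fedDaneSubproblem F w₀ g μ v)
    (hw : ‖w - wbar‖ ≤ γ * ‖wbar - w₀‖) :
    f w ≤ f w₀ - (2 - 3 * γ) / (2 * μ) * ‖gradient f w₀‖ ^ 2 +
        (2 * L * (1 + γ) ^ 2 + 3 * L) / (2 * μ ^ 2) * ‖gradient f w₀‖ ^ 2 +
        (L * (1 + γ) ^ 2 / μ ^ 2 + L / μ ^ 2 + γ / μ) * ‖g - gradient f w₀‖ ^ 2 -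
        μ⁻¹ * ⟪gradient f w₀, g - gradient f w₀⟫ := by
  set G := gradient f w₀
  have hdesc := descent_lemma_of_norm_sub_le hf hL hflip hw
  have hinner := mul_inner_sub_le_of_fedDaneSubproblem_min (hF wbar) hFlip hmin G
  have hstep : μ * ‖wbar - w₀‖ ≤ ‖G‖ + ‖g - G‖ :=
    (mul_norm_sub_le_of_fedDaneSubproblem_min hc (hF wbar) (hF w₀) hmin).trans
      (norm_le_norm_add_norm_sub' g G)
  have hsplit : ⟪G, g⟫ = ‖G‖ ^ 2 + ⟪G, g - G⟫ := by
    rw [inner_sub_right, real_inner_self_eq_norm_sq]; ring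
  set a := ‖G‖
  set b := ‖g - G‖
  set r := μ * ‖wbar - w₀‖
  have hr : 0 ≤ r := by positivity
  have hcross : a * r ≤ (3 * a ^ 2 + b ^ 2) / 2 := by
    nlinarith [sq_nonneg (a - b), norm_nonneg G, norm_nonneg (g - G)]
  have hsq : r ^ 2 ≤ 2 * a ^ 2 + 2 * b ^ 2 := by
    nlinarith [sq_nonneg (a - b), norm_nonneg G, norm_nonneg (g - G)]
  have key : μ ^ 2 * f w ≤ μ ^ 2 * f w₀ - μ * a ^ 2 - μ * ⟪G, g - G⟫ +
      (L + γ * μ) * ((3 * a ^ 2 + b ^ 2) / 2) + L * (1 + γ) ^ 2 * (a ^ 2 + b ^ 2) := by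
    linear_combination μ ^ 2 * hdesc + μ * hinner + (L + γ * μ) * hcross +
      L / 2 * (1 + γ) ^ 2 * hsq - μ * hsplit
  rw [← mul_le_mul_iff_right₀ (by positivity : 0 < μ ^ 2)]
  refine key.trans (le_of_sub_nonneg ?_)
  -- the stated coefficient of `‖g - ∇f(w₀)‖²` leaves a slack of `(L + γ μ) / (2 μ²)`
  have hslack : μ ^ 2 * (f w₀ - (2 - 3 * γ) / (2 * μ) * a ^ 2 +
        (2 * L * (1 + γ) ^ 2 + 3 * L) / (2 * μ ^ 2) * a ^ 2 +
        (L * (1 + γ) ^ 2 / μ ^ 2 + L / μ ^ 2 + γ / μ) * b ^ 2 - μ⁻¹ * ⟪G, g - G⟫) -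
      (μ ^ 2 * f w₀ - μ * a ^ 2 - μ * ⟪G, g - G⟫ +
        (L + γ * μ) * ((3 * a ^ 2 + b ^ 2) / 2) + L * (1 + γ) ^ 2 * (a ^ 2 + b ^ 2)) =
      (L + γ * μ) / 2 * b ^ 2 := by
    field_simp; ring
  rw [hslack]; positivity

theorem integral_le_of_le_sub_inner_sub_integral {Ω : Type*} [MeasurableSpace Ω]
    {ℙ : Measure Ω} [IsProbabilityMeasure ℙ] {X Y : Ω → ℝ} {Z : Ω → E}
    (hX : Integrable X ℙ) (hY : Integrable Y ℙ) (hZ : Integrable Z ℙ) {c C t : ℝ} {v : E}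
    (h : ∀ ω, X ω ≤ c + C * Y ω - t * ⟪v, Z ω - ∫ ω', Z ω' ∂ℙ⟫) :
    ∫ ω, X ω ∂ℙ ≤ c + C * ∫ ω, Y ω ∂ℙ := by
  have hcentred : Integrable (fun ω => Z ω - ∫ ω', Z ω' ∂ℙ) ℙ := hZ.sub (integrable_const _)
  have hmean : ∫ ω, ⟪v, Z ω - ∫ ω', Z ω' ∂ℙ⟫ ∂ℙ = 0 := by
    rw [integral_inner hcentred, integral_sub hZ (integrable_const _), integral_const,
      probReal_univ, one_smul, sub_self, inner_zero_right]
  have hinner : Integrable (fun ω => ⟪v, Z ω - ∫ ω', Z ω' ∂ℙ⟫) ℙ := hcentred.const_inner v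
  have hbound : Integrable (fun ω => c + C * Y ω) ℙ := (integrable_const c).add (hY.const_mul C)
  calc ∫ ω, X ω ∂ℙ ≤ ∫ ω, (c + C * Y ω - t * ⟪v, Z ω - ∫ ω', Z ω' ∂ℙ⟫) ∂ℙ :=
        integral_mono hX (hbound.sub (hinner.const_mul t)) h
    _ = c + C * ∫ ω, Y ω ∂ℙ := by
        rw [integral_sub hbound (hinner.const_mul t),
          integral_add (integrable_const c) (hY.const_mul C), integral_const, integral_const_mul,
          integral_const_mul, hmean, probReal_univ, one_smul, mul_zero, sub_zero]

end InnerProductSpace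

theorem feddane_expected_descent_convex_general {d N : ℕ}
    {Ω : Type*} [MeasurableSpace Ω] (ℙ : Measure Ω) [IsProbabilityMeasure ℙ]
    (F : Fin N → EuclideanSpace ℝ (Fin d) → ℝ) (hF : ∀ k, ContDiff ℝ 1 (F k))
    (p : Fin N → ℝ) (hp : ∀ k, 0 ≤ p k) (hpsum : ∑ k, p k = 1)
    (f : EuclideanSpace ℝ (Fin d) → ℝ) (hf : f = fun w => ∑ k, p k * F k w)
    (w₀ : EuclideanSpace ℝ (Fin d)) (μ γ L : ℝ)
    (hμ : 0 < μ) (hγ0 : 0 ≤ γ) (hL : 0 ≤ L)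
    (hconv : ∀ k, ConvexOn ℝ Set.univ (F k))
    (hFlip : ∀ k x y, ‖gradient (F k) x - gradient (F k) y‖ ≤ L * ‖x - y‖)
    (hflip : ∀ x y, ‖gradient f x - gradient f y‖ ≤ L * ‖x - y‖)
    (g : Ω → EuclideanSpace ℝ (Fin d))
    (hg_int : Integrable g ℙ)
    (hg_mean : (∫ ω, g ω ∂ℙ) = gradient f w₀)
    (P : Fin N → EuclideanSpace ℝ (Fin d) → EuclideanSpace ℝ (Fin d) → ℝ)
    (hP : P = fun k gv w =>
      F k w + ⟪gv - gradient (F k) w₀, w - w₀⟫ + μ / 2 * ‖w - w₀‖ ^ 2)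
    (w wbar : Fin N → Ω → EuclideanSpace ℝ (Fin d))
    (hmin : ∀ k ω v, P k (g ω) (wbar k ω) ≤ P k (g ω) v)
    (hinexact : ∀ k ω, ‖w k ω - wbar k ω‖ ≤ γ * ‖wbar k ω - w₀‖)
    (hfw_int : ∀ k, Integrable (fun ω => f (w k ω)) ℙ)
    (hvar_int : Integrable (fun ω => ‖g ω - gradient f w₀‖ ^ 2) ℙ) :
    (∑ k, p k * ∫ ω, f (w k ω) ∂ℙ) ≤
      f w₀ - (2 - 3 * γ) / (2 * μ) * ‖gradient f w₀‖ ^ 2 +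
        (2 * L * (1 + γ) ^ 2 + 3 * L) / (2 * μ ^ 2) * ‖gradient f w₀‖ ^ 2 +
        (L * (1 + γ) ^ 2 / μ ^ 2 + L / μ ^ 2 + γ / μ) *
          ∫ ω, ‖g ω - gradient f w₀‖ ^ 2 ∂ℙ := by
  have hFd : ∀ k, Differentiable ℝ (F k) := fun k => (hF k).differentiable one_ne_zero
  have hfd : Differentiable ℝ f := by subst hf; fun_prop
  subst hP
  have hdevice : ∀ k, ∫ ω, f (w k ω) ∂ℙ ≤
      f w₀ - (2 - 3 * γ) / (2 * μ) * ‖gradient f w₀‖ ^ 2 +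
        (2 * L * (1 + γ) ^ 2 + 3 * L) / (2 * μ ^ 2) * ‖gradient f w₀‖ ^ 2 +
        (L * (1 + γ) ^ 2 / μ ^ 2 + L / μ ^ 2 + γ / μ) *
          ∫ ω, ‖g ω - gradient f w₀‖ ^ 2 ∂ℙ := by
    intro k
    refine integral_le_of_le_sub_inner_sub_integral (t := μ⁻¹) (v := gradient f w₀)
      (hfw_int k) hvar_int hg_int fun ω => ?_
    rw [hg_mean]
    exact fedDane_descent_of_inexact_minimizer hμ hγ0 hL hfd hflip (hconv k) (hFd k) (hFlip k)
      (hmin k ω) (hinexact k ω)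
  calc (∑ k, p k * ∫ ω, f (w k ω) ∂ℙ) ≤ ∑ k, p k * _ :=
        Finset.sum_le_sum fun k _ => mul_le_mul_of_nonneg_left (hdevice k) (hp k)
    _ = _ := by rw [← Finset.sum_mul, hpsum, one_mul]

/-- Expected descent bound (convex case).  Let `g : Ω → ℝ^d` be a
random vector with `E[g] = ∇f(w₀)`, and for each device `k` and each realization
`g ω` let `w k ω` be a `γ`-inexact minimizer of the FedDANE subproblem `P k (g ω)`
(with exact minimizer `wbar k ω`).  Then
`∑ k, p k * E[f(w k)] ≤ f(w₀) - ((2-3γ)/(2μ))‖∇f(w₀)‖²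
  + ((2L(1+γ)² + 3L)/(2μ²))‖∇f(w₀)‖²
  + (L(1+γ)²/μ² + L/μ² + γ/μ) E[‖g - ∇f(w₀)‖²]`. -/
theorem feddane_expected_descent_convex {d N : ℕ}
    {Ω : Type*} [MeasurableSpace Ω] (ℙ : Measure Ω) [IsProbabilityMeasure ℙ]
    (F : Fin N → EuclideanSpace ℝ (Fin d) → ℝ) (hF : ∀ k, ContDiff ℝ 1 (F k))
    (p : Fin N → ℝ) (hp : ∀ k, 0 ≤ p k) (hpsum : ∑ k, p k = 1)
    (f : EuclideanSpace ℝ (Fin d) → ℝ) (hf : f = fun w => ∑ k, p k * F k w)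
    (w₀ : EuclideanSpace ℝ (Fin d)) (μ γ L : ℝ)
    (hμ : 0 < μ) (hγ0 : 0 ≤ γ) (hγ1 : γ < 1) (hL : 0 ≤ L)
    (hconv : ∀ k, ConvexOn ℝ Set.univ (F k))
    (hFlip : ∀ k x y, ‖gradient (F k) x - gradient (F k) y‖ ≤ L * ‖x - y‖)
    (hflip : ∀ x y, ‖gradient f x - gradient f y‖ ≤ L * ‖x - y‖)
    (g : Ω → EuclideanSpace ℝ (Fin d))
    (hg_int : Integrable g ℙ)
    (hg_mean : (∫ ω, g ω ∂ℙ) = gradient f w₀)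
    (P : Fin N → EuclideanSpace ℝ (Fin d) → EuclideanSpace ℝ (Fin d) → ℝ)
    (hP : P = fun k gv w =>
      F k w + ⟪gv - gradient (F k) w₀, w - w₀⟫ + μ / 2 * ‖w - w₀‖ ^ 2)
    (w wbar : Fin N → Ω → EuclideanSpace ℝ (Fin d))
    (hmin : ∀ k ω v, P k (g ω) (wbar k ω) ≤ P k (g ω) v)
    (hinexact : ∀ k ω, ‖w k ω - wbar k ω‖ ≤ γ * ‖wbar k ω - w₀‖)
    (hfw_int : ∀ k, Integrable (fun ω => f (w k ω)) ℙ)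
    (hvar_int : Integrable (fun ω => ‖g ω - gradient f w₀‖ ^ 2) ℙ) :
    (∑ k, p k * ∫ ω, f (w k ω) ∂ℙ) ≤
      f w₀ - (2 - 3 * γ) / (2 * μ) * ‖gradient f w₀‖ ^ 2 +
        (2 * L * (1 + γ) ^ 2 + 3 * L) / (2 * μ ^ 2) * ‖gradient f w₀‖ ^ 2 +
        (L * (1 + γ) ^ 2 / μ ^ 2 + L / μ ^ 2 + γ / μ) *
          ∫ ω, ‖g ω - gradient f w₀‖ ^ 2 ∂ℙ :=
  feddane_expected_descent_convex_general ℙ F hF p hp hpsum f hf w₀ μ γ L hμ hγ0 hL hconv hFlip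
    hflip g hg_int hg_mean P hP w wbar hmin hinexact hfw_int hvar_int
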